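/- Let G be a locally finite simple graph on a vertex set V in which every vertex has positive degree, let 𝓛 be its normalized Laplacian, and let v ∈ V. For the Dirac function δ_v (equal to 1 at v and 0 elsewhere) one has ∑_{u∈V} |(𝓛δ_v)(u)|² = 1 + (1/d(v))·∑_{w adjacent to v} 1/d(w). Consequently ‖δ_v‖ = Λ(v)·‖𝓛δ_v‖, where Λ(v) = (1 + (1/d(v))·∑_{w adjacent to v} 1/d(w))^{−1/2}; in particular the single vertex set {v} is a Λ(v)-set. -/

import Mathlib

noncomputable def nLap {V : Type*} (G : SimpleGraph V) [G.LocallyFinite] (f : V → ℂ) (v : V) : ℂ :=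
  f v - ∑ u ∈ G.neighborFinset v, f u / (Real.sqrt ((G.degree u : ℝ) * (G.degree v : ℝ)) : ℂ)

/-! A function supported on `{v}` is `c • δ_v` with `c = f v`, and `𝓛 δ_v` is `1` at `v`,
`-1/√(d v · d u)` at each neighbour `u` of `v` and `0` elsewhere. Hence
`‖𝓛 (c • δ_v)‖² = |c|² (1 + ∑_{u ∼ v} 1/(d v · d u)) = ‖c • δ_v‖² · Λ(v)⁻²`. -/

lemma Real.rpow_neg_half_mul_sqrt {x : ℝ} (hx : 0 < x) : x ^ (-(1 / 2 : ℝ)) * √x = 1 := by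
  rw [Real.sqrt_eq_rpow, ← Real.rpow_add hx]
  norm_num

namespace nLap

variable {V : Type*} (G : SimpleGraph V) [G.LocallyFinite]

lemma const_mul (c : ℂ) (f : V → ℂ) (u : V) :
    nLap G (fun w => c * f w) u = c * nLap G f u := by
  simp [nLap, Finset.mul_sum, mul_div_assoc, mul_sub]

variable [DecidableEq V]

lemma dirac (v u : V) :
    nLap G (fun w => if w = v then (1 : ℂ) else 0) u =
      if u = v then 1 else if u ∈ G.neighborFinset v then
        -(1 / (Real.sqrt ((G.degree v : ℝ) * (G.degree u : ℝ)) : ℂ)) else 0 := by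
  have hsum : ∑ w ∈ G.neighborFinset u, (if w = v then (1 : ℂ) else 0) /
      (Real.sqrt ((G.degree w : ℝ) * (G.degree u : ℝ)) : ℂ) =
      if u ∈ G.neighborFinset v then
        (1 : ℂ) / (Real.sqrt ((G.degree v : ℝ) * (G.degree u : ℝ)) : ℂ) else 0 := by
    have hmem : v ∈ G.neighborFinset u ↔ u ∈ G.neighborFinset v := by simp [G.adj_comm]
    simp only [ite_div, zero_div, Finset.sum_ite_eq', hmem]
  rw [nLap, hsum]
  by_cases huv : u = v
  · simp [huv]
  · simp only [huv, if_false]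
    split_ifs <;> simp

lemma norm_sq_dirac (v u : V) :
    ‖nLap G (fun w => if w = v then (1 : ℂ) else 0) u‖ ^ 2 =
      if u = v then 1 else if u ∈ G.neighborFinset v then
        ((G.degree v : ℝ) * (G.degree u : ℝ))⁻¹ else 0 := by
  rw [dirac]
  split_ifs
  · simp
  · rw [norm_neg, norm_div, norm_one, Complex.norm_real, Real.norm_of_nonneg (Real.sqrt_nonneg _),
      div_pow, one_pow, Real.sq_sqrt (by positivity), one_div]
  · simp

lemma tsum_norm_sq_dirac (v : V) :
    ∑' u : V, ‖nLap G (fun w => if w = v then (1 : ℂ) else 0) u‖ ^ 2 =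
      1 + (1 / (G.degree v : ℝ)) * ∑ w ∈ G.neighborFinset v, 1 / (G.degree w : ℝ) := by
  have hv : v ∉ G.neighborFinset v := by simp
  have hzero : ∀ u ∉ insert v (G.neighborFinset v),
      ‖nLap G (fun w => if w = v then (1 : ℂ) else 0) u‖ ^ 2 = 0 := by
    intro u hu
    rw [Finset.mem_insert, not_or] at hu
    simp [norm_sq_dirac, hu.1, hu.2]
  rw [tsum_eq_sum hzero, Finset.sum_insert hv, norm_sq_dirac, if_pos rfl, Finset.mul_sum]
  congr 1
  refine Finset.sum_congr rfl fun u hu => ?_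
  rw [norm_sq_dirac, if_neg (ne_of_mem_of_not_mem hu hv), if_pos hu, mul_inv, one_div, one_div]

end nLap

section SingletonSupport

variable {V : Type*} [DecidableEq V]

lemma eq_const_mul_dirac_of_support_subset {φ : V → ℂ} {v : V}
    (hφ : ∀ w, w ∉ ({v} : Set V) → φ w = 0) :
    φ = fun u => φ v * (if u = v then (1 : ℂ) else 0) := by
  funext u
  by_cases h : u = v
  · simp [h]
  · simp [h, hφ u h]

variable (G : SimpleGraph V) [G.LocallyFinite]

lemma sqrt_tsum_norm_sq_eq_of_support_subset_singleton {φ : V → ℂ} {v : V}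
    (hφ : ∀ w, w ∉ ({v} : Set V) → φ w = 0) :
    √(∑' u : V, ‖φ u‖ ^ 2) =
      (1 + (1 / (G.degree v : ℝ)) * ∑ w ∈ G.neighborFinset v, 1 / (G.degree w : ℝ))
          ^ (-(1 / 2 : ℝ)) * √(∑' u : V, ‖nLap G φ u‖ ^ 2) := by
  have hS : 0 < 1 + (1 / (G.degree v : ℝ)) * ∑ w ∈ G.neighborFinset v, 1 / (G.degree w : ℝ) := by
    positivity
  have hφv : ∑' u : V, ‖φ u‖ ^ 2 = ‖φ v‖ ^ 2 :=
    tsum_eq_single v fun u hu => by simp [hφ u hu]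
  have hLap : ∑' u : V, ‖nLap G φ u‖ ^ 2 =
      ‖φ v‖ ^ 2 * (1 + (1 / (G.degree v : ℝ)) * ∑ w ∈ G.neighborFinset v, 1 / (G.degree w : ℝ)) := by
    conv_lhs => rw [eq_const_mul_dirac_of_support_subset hφ]
    simp only [nLap.const_mul, norm_mul, mul_pow]
    rw [tsum_mul_left, nLap.tsum_norm_sq_dirac]
  rw [hφv, hLap, Real.sqrt_mul (sq_nonneg _), mul_left_comm, Real.rpow_neg_half_mul_sqrt hS,
    mul_one]

end SingletonSupport

theorem dirac_lambda_set {V : Type*} [DecidableEq V] (G : SimpleGraph V) [G.LocallyFinite]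
    (v : V) :
    (∑' u : V, ‖nLap G (fun w => if w = v then (1 : ℂ) else 0) u‖ ^ 2) =
        1 + (1 / (G.degree v : ℝ)) * ∑ w ∈ G.neighborFinset v, 1 / (G.degree w : ℝ) ∧
    Real.sqrt (∑' u : V, ‖(fun w => if w = v then (1 : ℂ) else 0) u‖ ^ 2) =
        (1 + (1 / (G.degree v : ℝ)) * ∑ w ∈ G.neighborFinset v, 1 / (G.degree w : ℝ))
            ^ (-(1 / 2 : ℝ)) *
          Real.sqrt (∑' u : V, ‖nLap G (fun w => if w = v then (1 : ℂ) else 0) u‖ ^ 2) ∧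
    (∀ φ : V → ℂ, (∀ w, w ∉ ({v} : Set V) → φ w = 0) →
      Summable (fun u => ‖φ u‖ ^ 2) → Summable (fun u => ‖nLap G φ u‖ ^ 2) →
      Real.sqrt (∑' u : V, ‖φ u‖ ^ 2) ≤
        (1 + (1 / (G.degree v : ℝ)) * ∑ w ∈ G.neighborFinset v, 1 / (G.degree w : ℝ))
            ^ (-(1 / 2 : ℝ)) *
          Real.sqrt (∑' u : V, ‖nLap G φ u‖ ^ 2)) :=
  ⟨nLap.tsum_norm_sq_dirac G v,
    sqrt_tsum_norm_sq_eq_of_support_subset_singleton G fun _ hw => if_neg hw,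
    fun _ hφ _ _ => (sqrt_tsum_norm_sq_eq_of_support_subset_singleton G hφ).le⟩
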